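/- arXiv:1204.1493 — 5 statements merged into one kernel-verified Lean document; each statement's English description precedes it below -/
import Mathlib

section
/- Let n ∈ ℕ, let a, α ∈ ℝ with α not a negative integer (i.e. for every m ∈ ℕ, α ≠ -(m+1)), and let c : Fin n → ℝ be arbitrary constants. Define F : ℝ → ℝ by F(y) = a · (Γ(α+1)/Γ(α+n+1)) · y^(α+n) + Σ_{j=0}^{n−1} c_j · y^j / j!. Then for every x > 0, the n-th iterated derivative of F at x equals a · x^α. (Paper's Theorem 3.2: the order-(−n) fractional derivative formula (3.1.5) is an n-fold antiderivative of a x^α, and differentiating it n times makes all terms containing the arbitrary constants disappear.) -/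
open Set Filter Topology

private lemma aux_iter_rpow (β : ℝ) : ∀ n : ℕ, ∀ x : ℝ, 0 < x →
    iteratedDeriv n (fun y : ℝ => y ^ β) x
      = (∏ i ∈ Finset.range n, (β - i)) * x ^ (β - n) := by
  intro n
  induction n with
  | zero => intro x hx; simp
  | succ n ih =>
    intro x hx
    rw [iteratedDeriv_succ]
    have hev : iteratedDeriv n (fun y : ℝ => y ^ β)
        =ᶠ[𝓝 x] fun y => (∏ i ∈ Finset.range n, (β - i)) * y ^ (β - n) := by
      filter_upwards [isOpen_Ioi.mem_nhds (show x ∈ Ioi (0:ℝ) from hx)] with y hy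
      exact ih y hy
    rw [hev.deriv_eq]
    have hd : HasDerivAt (fun y : ℝ => y ^ (β - n)) ((β - n) * x ^ (β - n - 1)) x :=
      Real.hasDerivAt_rpow_const (Or.inl hx.ne')
    rw [deriv_const_mul _ hd.differentiableAt, hd.deriv, Finset.prod_range_succ]
    have he : β - ((n : ℝ) + 1) = β - n - 1 := by ring
    push_cast
    rw [he]
    ring

private lemma aux_iter_deriv_zero : ∀ n : ℕ,
    iteratedDeriv n (fun _ : ℝ => (0:ℝ)) x = 0 := by
  intro n
  induction n with
  | zero => simp
  | succ m ihm =>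
    rw [iteratedDeriv_succ',
      show deriv (fun _ : ℝ => (0:ℝ)) = fun _ => (0:ℝ) from funext fun y => deriv_const y 0]
    exact ihm

private lemma aux_iter_pow_zero : ∀ n j : ℕ, j < n →
    ∀ x : ℝ, iteratedDeriv n (fun y : ℝ => y ^ j) x = 0 := by
  intro n
  induction n with
  | zero => intro j h; omega
  | succ n ih =>
    intro j hj x
    rw [iteratedDeriv_succ']
    have hder : deriv (fun y : ℝ => y ^ j) = fun y : ℝ => (j : ℝ) * y ^ (j - 1) := by
      funext y; simp [deriv_pow]
    rw [hder]
    cases j with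
    | zero =>
      simp only [Nat.cast_zero, zero_mul]
      rw [aux_iter_deriv_zero n]
    | succ k =>
      simp only [Nat.add_sub_cancel]
      have hc : ContDiff ℝ (n : ℕ∞) (fun y : ℝ => y ^ k) := contDiff_id.pow k
      rw [← iteratedDerivWithin_univ,
        iteratedDerivWithin_const_mul (Set.mem_univ x) uniqueDiffOn_univ _ (hc.contDiffOn.contDiffWithinAt (Set.mem_univ x)),
        iteratedDerivWithin_univ, ih k (by omega) x, mul_zero]

private lemma aux_iteratedDeriv_sum {ι : Type*} (n : ℕ) (u : Finset ι) (f : ι → ℝ → ℝ)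
    (h : ∀ i ∈ u, ContDiff ℝ (n : ℕ∞) (f i)) (x : ℝ) :
    iteratedDeriv n (fun y => ∑ i ∈ u, f i y) x = ∑ i ∈ u, iteratedDeriv n (f i) x := by
  simp only [iteratedDeriv_eq_iteratedFDeriv]
  rw [show (fun y => ∑ i ∈ u, f i y) = (∑ i ∈ u, f i ·) from rfl, iteratedFDeriv_sum h]
  simp

private lemma aux_gamma_prod (α : ℝ) (hα : ∀ m : ℕ, α ≠ -((m : ℝ) + 1)) (n : ℕ) :
    Real.Gamma (α + n + 1) = (∏ i ∈ Finset.range n, (α + 1 + i)) * Real.Gamma (α + 1) := by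
  induction n with
  | zero => simp
  | succ n ih =>
    have h0 : α + n + 1 ≠ 0 := by
      intro h; exact hα n (by linarith)
    have he : α + ((n : ℝ) + 1) + 1 = (α + n + 1) + 1 := by ring
    push_cast
    rw [he, Real.Gamma_add_one h0, ih, Finset.prod_range_succ]
    ring

private lemma aux_prod_shift (α : ℝ) (n : ℕ) :
    (∏ i ∈ Finset.range n, (α + n - i)) = ∏ i ∈ Finset.range n, (α + 1 + i) := by
  rw [← Finset.prod_range_reflect (fun i => α + n - i) n]
  apply Finset.prod_congr rfl
  intro j hj
  rw [Finset.mem_range] at hj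
  have h1 : n - 1 - j = n - (j + 1) := by omega
  have h2 : ((n - (j + 1) : ℕ) : ℝ) = n - (j + 1) := by
    rw [Nat.cast_sub (by omega)]; push_cast; ring
  rw [h1, h2]
  ring

theorem iteratedDeriv_antiderivative_formula
    (n : ℕ) (a α : ℝ) (hα : ∀ m : ℕ, α ≠ -((m : ℝ) + 1)) (c : Fin n → ℝ)
    (x : ℝ) (hx : 0 < x) :
    iteratedDeriv n
      (fun y : ℝ =>
        a * (Real.Gamma (α + 1) / Real.Gamma (α + n + 1)) * y ^ (α + n) +
          ∑ j : Fin n, c j * y ^ (j : ℕ) / (Nat.factorial j : ℝ)) x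
      = a * x ^ α := by
  set C : ℝ := a * (Real.Gamma (α + 1) / Real.Gamma (α + n + 1)) with hC
  have hxs : x ∈ Ioi (0:ℝ) := hx
  have hs : UniqueDiffOn ℝ (Ioi (0:ℝ)) := isOpen_Ioi.uniqueDiffOn
  have key : ∀ (m : ℕ) (f : ℝ → ℝ),
      iteratedDerivWithin m f (Ioi (0:ℝ)) x = iteratedDeriv m f x := by
    intro m f
    rw [iteratedDerivWithin_eq_iteratedFDerivWithin, iteratedDeriv_eq_iteratedFDeriv,
      iteratedFDerivWithin_of_isOpen m isOpen_Ioi hxs]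
  have hrpow : ContDiffOn ℝ (n : ℕ∞) (fun y : ℝ => y ^ (α + n)) (Ioi (0:ℝ)) := by
    intro y hy
    exact (Real.contDiffAt_rpow_const_of_ne (ne_of_gt hy)).contDiffWithinAt
  have hf : ContDiffOn ℝ (n : ℕ∞) (fun y : ℝ => C * y ^ (α + n)) (Ioi (0:ℝ)) :=
    contDiffOn_const.mul hrpow
  have hgterm : ∀ j : Fin n, ContDiff ℝ (n : ℕ∞)
      (fun y : ℝ => c j * y ^ (j : ℕ) / (Nat.factorial j : ℝ)) := by
    intro j
    exact ((contDiff_const.mul (contDiff_id.pow _)).div_const _)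
  have hg : ContDiffOn ℝ (n : ℕ∞)
      (fun y : ℝ => ∑ j : Fin n, c j * y ^ (j : ℕ) / (Nat.factorial j : ℝ)) (Ioi (0:ℝ)) := by
    apply ContDiff.contDiffOn
    exact ContDiff.sum fun j _ => hgterm j
  rw [← key n _,
    show (fun y : ℝ => C * y ^ (α + n) + ∑ j : Fin n, c j * y ^ (j : ℕ) / (Nat.factorial j : ℝ))
      = ((fun y : ℝ => C * y ^ (α + n)) +
          fun y : ℝ => ∑ j : Fin n, c j * y ^ (j : ℕ) / (Nat.factorial j : ℝ)) from rfl,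
    iteratedDerivWithin_add hxs hs (hf x hxs) (hg x hxs),
    iteratedDerivWithin_const_mul hxs hs C (hrpow x hxs), key, key]
  have hpoly : iteratedDeriv n
      (fun y : ℝ => ∑ j : Fin n, c j * y ^ (j : ℕ) / (Nat.factorial j : ℝ)) x = 0 := by
    rw [aux_iteratedDeriv_sum n Finset.univ _ (fun j _ => hgterm j) x]
    apply Finset.sum_eq_zero
    intro j _
    have : (fun y : ℝ => c j * y ^ (j : ℕ) / (Nat.factorial j : ℝ))
        = fun y : ℝ => (c j / (Nat.factorial j : ℝ)) * y ^ (j : ℕ) := by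
      funext y; ring
    have hcj : ContDiffOn ℝ (n : ℕ∞) (fun y : ℝ => y ^ (j : ℕ)) Set.univ :=
      (contDiff_id.pow (j : ℕ)).contDiffOn
    rw [this, ← iteratedDerivWithin_univ,
      iteratedDerivWithin_const_mul (Set.mem_univ x) uniqueDiffOn_univ _ (hcj x (Set.mem_univ x)),
      iteratedDerivWithin_univ, aux_iter_pow_zero n j j.2 x, mul_zero]
  rw [hpoly, add_zero, aux_iter_rpow (α + n) n x hx]
  have hΓ1 : Real.Gamma (α + 1) ≠ 0 := by
    apply Real.Gamma_ne_zero
    intro m h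
    exact hα m (by push_cast at h ⊢; linarith)
  have hΓ2 : Real.Gamma (α + n + 1) ≠ 0 := by
    apply Real.Gamma_ne_zero
    intro m h
    exact hα (m + n) (by push_cast at h ⊢; linarith)
  have hprod : (∏ i ∈ Finset.range n, (α + n - i))
      = Real.Gamma (α + n + 1) / Real.Gamma (α + 1) := by
    rw [aux_prod_shift, aux_gamma_prod α hα n]
    field_simp
  have hexp : α + (n : ℝ) - n = α := by ring
  rw [hexp, hprod, hC]
  field_simp
end

section
/- Let s ∈ ℝ be not an integer, and let d : ℕ → ℝ satisfy d(n) ≠ 0 for all n and lim_{n→∞} |n · d(n+1) / d(n)| = 0. Then for every x > 0 the series Σ_{n=0}^{∞} d(n) · x^(−n−s) / Γ(−n−s+1) is summable. (Paper's Theorem 3.4: with c_k = d(−k), the condition lim_{k→−∞} |k c_{k−1}/c_k| = 0 is a sufficient condition for the correction series R(s,x) = Σ_{k=−∞}^{−1} c_k x^(k−s)/Γ(k−s+1) in the first definition of the fractional derivative to be well defined for all x ∈ ℝ₊.) -/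
theorem correction_series_summable
    (s : ℝ) (hs : ∀ k : ℤ, s ≠ (k : ℝ)) (d : ℕ → ℝ) (hd : ∀ n : ℕ, d n ≠ 0)
    (hlim : Filter.Tendsto (fun n : ℕ => |(n : ℝ) * d (n + 1) / d n|)
      Filter.atTop (nhds 0))
    (x : ℝ) (hx : 0 < x) :
    Summable (fun n : ℕ => d n * x ^ (-(n : ℝ) - s) / Real.Gamma (-(n : ℝ) - s + 1)) := by
  set f : ℕ → ℝ := fun n => d n * x ^ (-(n : ℝ) - s) / Real.Gamma (-(n : ℝ) - s + 1) with hf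
  have hΓ1 : ∀ n : ℕ, Real.Gamma (-(n : ℝ) - s + 1) ≠ 0 := by
    intro n
    apply Real.Gamma_ne_zero
    intro m h
    exact hs (-(n : ℤ) + 1 + m) (by push_cast; linarith)
  have hΓ2 : ∀ n : ℕ, Real.Gamma (-(n : ℝ) - s) ≠ 0 := by
    intro n
    apply Real.Gamma_ne_zero
    intro m h
    exact hs (-(n : ℤ) + m) (by push_cast; linarith)
  have hns : ∀ n : ℕ, (-(n : ℝ) - s) ≠ 0 := by
    intro n h
    exact hs (-(n : ℤ)) (by push_cast; linarith)
  have hfne : ∀ n : ℕ, f n ≠ 0 := fun n =>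
    div_ne_zero (mul_ne_zero (hd n) (ne_of_gt (Real.rpow_pos_of_pos hx _))) (hΓ1 n)
  have key : ∀ n : ℕ, ‖f (n + 1)‖ / ‖f n‖ = |(n : ℝ) + s| * (|d (n + 1)| / |d n|) / x := by
    intro n
    have h1 : (-((n : ℝ) + 1) - s + 1) = -(n : ℝ) - s := by ring
    have h2 : Real.Gamma (-(n : ℝ) - s + 1)
        = (-(n : ℝ) - s) * Real.Gamma (-(n : ℝ) - s) := Real.Gamma_add_one (hns n)
    have h3 : x ^ (-((n : ℝ) + 1) - s) = x ^ (-(n : ℝ) - s) / x := by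
      rw [show (-((n : ℝ) + 1) - s) = (-(n : ℝ) - s) - 1 by ring,
        Real.rpow_sub hx, Real.rpow_one]
    have hxp : (0 : ℝ) < x ^ (-(n : ℝ) - s) := Real.rpow_pos_of_pos hx _
    simp only [hf, Real.norm_eq_abs]
    push_cast
    rw [h1, h2, h3, abs_div, abs_div, abs_mul, abs_mul, abs_mul,
      abs_of_pos hxp, abs_of_pos (div_pos hxp hx)]
    have hne1 : |d n| ≠ 0 := abs_ne_zero.mpr (hd n)
    have hne2 : |Real.Gamma (-(n : ℝ) - s)| ≠ 0 := abs_ne_zero.mpr (hΓ2 n)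
    have hne3 : |(-(n : ℝ) - s)| ≠ 0 := abs_ne_zero.mpr (hns n)
    have hne4 : x ≠ 0 := ne_of_gt hx
    have h5 : |(-(n : ℝ) - s)| = |(n : ℝ) + s| := by rw [show (-(n : ℝ) - s) = -((n : ℝ) + s) by ring, abs_neg]
    rw [h5] at hne3 ⊢
    field_simp
  apply summable_of_ratio_test_tendsto_lt_one (l := 0) one_pos
    (Filter.Eventually.of_forall hfne)
  have heq : (fun n : ℕ => ‖f (n + 1)‖ / ‖f n‖)
      = fun n : ℕ => |(n : ℝ) + s| * (|d (n + 1)| / |d n|) / x := funext key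
  rw [heq]
  have hbound : Filter.Tendsto (fun n : ℕ => 2 * |(n : ℝ) * d (n + 1) / d n| / x)
      Filter.atTop (nhds 0) := by
    have := (hlim.const_mul 2).div_const x
    simpa using this
  apply squeeze_zero' (g := fun n : ℕ => 2 * |(n : ℝ) * d (n + 1) / d n| / x)
  · filter_upwards with n
    positivity
  · filter_upwards [Filter.eventually_ge_atTop ⌈|s|⌉₊] with n hn
    have hns' : |s| ≤ (n : ℝ) := le_trans (Nat.le_ceil _) (by exact_mod_cast hn)
    have h1 : |(n : ℝ) + s| ≤ 2 * n := by
      calc |(n : ℝ) + s| ≤ |(n : ℝ)| + |s| := abs_add_le _ _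
        _ ≤ n + n := by rw [abs_of_nonneg (n.cast_nonneg)]; linarith
        _ = 2 * n := by ring
    have h2 : |(n : ℝ) * d (n + 1) / d n| = (n : ℝ) * (|d (n + 1)| / |d n|) := by
      rw [abs_div, abs_mul, abs_of_nonneg (n.cast_nonneg), mul_div_assoc]
    rw [h2]
    have h3 : (0 : ℝ) ≤ |d (n + 1)| / |d n| := by positivity
    apply div_le_div_of_nonneg_right ?_ hx.le
    calc |(n : ℝ) + s| * (|d (n + 1)| / |d n|) ≤ 2 * n * (|d (n + 1)| / |d n|) :=
        mul_le_mul_of_nonneg_right h1 h3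
      _ = 2 * ((n : ℝ) * (|d (n + 1)| / |d n|)) := by ring
  · exact hbound
end

section
/- Let p, q ∈ ℕ with q ≥ 1, set s = p/q, and let a, α ∈ ℝ with α not a negative integer (i.e. for every m ∈ ℕ, α ≠ -(m+1)). Suppose Γ(α − m·s + 1) ≠ 0 for every m ∈ ℕ with 1 ≤ m < q. Then for every x > 0, (h q).1 · x^((h q).2) equals the p-th iterated derivative of the function y ↦ a · y^α at x. (Paper's equation (4.1.6): applying the order-(p/q) fractional derivative q times to a x^α gives the ordinary derivative of integer order p.) -/
/-- The coefficient and exponent obtained by applying `m` times the order-`s`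
fractional derivative rule `d^s (c xᵝ) = c Γ(β+1)/Γ(β-s+1) x^(β-s)` starting
from `a·xᵅ`. -/
noncomputable def fracDerIter (s a α : ℝ) : ℕ → ℝ × ℝ
  | 0 => (a, α)
  | m + 1 =>
      ((fracDerIter s a α m).1 * Real.Gamma ((fracDerIter s a α m).2 + 1) /
          Real.Gamma ((fracDerIter s a α m).2 - s + 1),
        (fracDerIter s a α m).2 - s)

lemma fracDerIter_snd (s a α : ℝ) (m : ℕ) :
    (fracDerIter s a α m).2 = α - m * s := by
  induction m with
  | zero => simp [fracDerIter]
  | succ n ih => simp [fracDerIter, ih]; push_cast; try ring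

lemma iteratedDeriv_rpow_aux (a α : ℝ) (n : ℕ) :
    ∀ x : ℝ, 0 < x →
      iteratedDeriv n (fun y : ℝ => a * y ^ α) x
        = (a * ∏ i ∈ Finset.range n, (α - i)) * x ^ (α - n) := by
  induction n with
  | zero => intro x hx; simp
  | succ n ih =>
    intro x hx
    rw [iteratedDeriv_succ]
    have hev : (iteratedDeriv n (fun y : ℝ => a * y ^ α)) =ᶠ[nhds x]
        (fun y => (a * ∏ i ∈ Finset.range n, (α - i)) * y ^ (α - n)) := by
      filter_upwards [IsOpen.mem_nhds isOpen_Ioi hx] with y hy using ih y hy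
    rw [hev.deriv_eq]
    have hd : HasDerivAt (fun y : ℝ => (a * ∏ i ∈ Finset.range n, (α - i)) * y ^ (α - n))
        ((a * ∏ i ∈ Finset.range n, (α - i)) * ((α - n) * x ^ (α - n - 1))) x :=
      (Real.hasDerivAt_rpow_const (Or.inl hx.ne')).const_mul _
    rw [hd.deriv, Finset.prod_range_succ,
      show α - ((n+1 : ℕ) : ℝ) = α - n - 1 by push_cast; ring]
    ring

lemma gamma_div_eq_prod (α : ℝ) (hα : ∀ m : ℕ, α ≠ -((m : ℝ) + 1)) (n : ℕ) :
    Real.Gamma (α + 1) / Real.Gamma (α - n + 1)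
      = ∏ i ∈ Finset.range n, (α - i) := by
  by_cases hcase : ∃ k : ℕ, k < n ∧ α = k
  · obtain ⟨k, hk, rfl⟩ := hcase
    have h0 : Real.Gamma ((k : ℝ) - n + 1) = 0 := by
      rw [Real.Gamma_eq_zero_iff]
      refine ⟨n - 1 - k, ?_⟩
      rw [Nat.cast_sub (by omega), Nat.cast_sub (by omega : 1 ≤ n)]
      push_cast; ring
    rw [h0, div_zero]
    exact (Finset.prod_eq_zero (Finset.mem_range.2 hk) (by simp)).symm
  · push_neg at hcase
    have hne : ∀ i : ℕ, i < n → α - i ≠ 0 := by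
      intro i hi h
      exact hcase i hi (by linarith)
    have key : Real.Gamma (α + 1)
        = (∏ i ∈ Finset.range n, (α - i)) * Real.Gamma (α - n + 1) := by
      induction n with
      | zero => simp
      | succ m ih =>
        have hne' : ∀ i : ℕ, i < m → α - i ≠ 0 := fun i hi => hne i (hi.trans m.lt_succ_self)
        have hcase' : ∀ k : ℕ, k < m → α ≠ k := fun k hk => hcase k (hk.trans m.lt_succ_self)
        rw [ih hcase' hne', Finset.prod_range_succ]
        have : Real.Gamma (α - m + 1) = (α - m) * Real.Gamma (α - (m + 1) + 1) := by
          have := Real.Gamma_add_one (s := α - m) (hne m m.lt_succ_self)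
          rw [this]; congr 1; push_cast; ring
        rw [this]; push_cast; ring
    have hΓne : Real.Gamma (α - n + 1) ≠ 0 := by
      apply Real.Gamma_ne_zero
      intro m h
      rcases Nat.lt_or_ge m n with hm | hm
      · refine hcase (n - 1 - m) (by omega) ?_
        rw [Nat.cast_sub (by omega), Nat.cast_sub (by omega : 1 ≤ n)]
        push_cast; linarith
      · exact hα (m - n) (by push_cast [hm] at h ⊢; linarith)
    rw [key, mul_div_assoc, div_self hΓne, mul_one]

theorem fracDerIter_q_times_eq_iteratedDeriv
    (p q : ℕ) (hq : 1 ≤ q) (a α : ℝ) (hα : ∀ m : ℕ, α ≠ -((m : ℝ) + 1))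
    (hΓ : ∀ m : ℕ, 1 ≤ m → m < q →
      Real.Gamma (α - m * ((p : ℝ) / q) + 1) ≠ 0)
    (x : ℝ) (hx : 0 < x) :
    (fracDerIter ((p : ℝ) / q) a α q).1 * x ^ (fracDerIter ((p : ℝ) / q) a α q).2 =
      iteratedDeriv p (fun y : ℝ => a * y ^ α) x := by
  set s : ℝ := (p : ℝ) / q with hs
  have hq0 : (q : ℝ) ≠ 0 := by positivity
  have hqs : (q : ℝ) * s = p := by rw [hs]; field_simp
  have hfst : ∀ m : ℕ, 1 ≤ m → m ≤ q →
      (fracDerIter s a α m).1 = a * Real.Gamma (α + 1) / Real.Gamma (α - m * s + 1) := by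
    intro m
    induction m with
    | zero => intro h _; exact absurd h (by norm_num)
    | succ n ih =>
      intro _ hmq
      rcases Nat.eq_zero_or_pos n with rfl | hn
      · simp [fracDerIter, fracDerIter_snd]
        try ring_nf
      · rw [show n + 1 = n + 1 from rfl]
        have ihn := ih hn (by omega)
        have hΓn : Real.Gamma (α - n * s + 1) ≠ 0 := hΓ n hn (by omega)
        show (fracDerIter s a α n).1 * Real.Gamma ((fracDerIter s a α n).2 + 1) /
            Real.Gamma ((fracDerIter s a α n).2 - s + 1) = _
        rw [ihn, fracDerIter_snd]
        rw [show α - n * s - s = α - (↑(n + 1)) * s by push_cast; ring]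
        field_simp
        try ring
  rw [hfst q hq le_rfl, fracDerIter_snd, hqs,
    iteratedDeriv_rpow_aux a α p x hx, mul_div_assoc,
    gamma_div_eq_prod α hα p, mul_assoc]
end

section
/- Let s₁, s₂, a, α ∈ ℝ with Γ(α − s₁ + 1) ≠ 0 and Γ(α − s₂ + 1) ≠ 0. Then (a · Γ(α+1)/Γ(α−s₂+1)) · (Γ((α−s₂)+1)/Γ((α−s₂)−s₁+1)) = (a · Γ(α+1)/Γ(α−s₁+1)) · (Γ((α−s₁)+1)/Γ((α−s₁)−s₂+1)) = a · Γ(α+1)/Γ(α−(s₁+s₂)+1). In other words, applying the order-s₁ fractional derivative rule and then the order-s₂ rule to a·x^α gives the same result as applying them in the opposite order, and both equal the order-(s₁+s₂) fractional derivative a · Γ(α+1)/Γ(α−s₁−s₂+1) · x^(α−s₁−s₂). (Paper's Theorem 4.9: commutativity of the fractional derivative of the second definition when the correction terms vanish, e.g. for orders of absolute value less than 1.) -/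
theorem fracDer_rule_commutes
    (s₁ s₂ a α : ℝ)
    (h1 : Real.Gamma (α - s₁ + 1) ≠ 0) (h2 : Real.Gamma (α - s₂ + 1) ≠ 0) :
    (a * Real.Gamma (α + 1) / Real.Gamma (α - s₂ + 1)) *
        (Real.Gamma ((α - s₂) + 1) / Real.Gamma ((α - s₂) - s₁ + 1)) =
      (a * Real.Gamma (α + 1) / Real.Gamma (α - s₁ + 1)) *
        (Real.Gamma ((α - s₁) + 1) / Real.Gamma ((α - s₁) - s₂ + 1)) ∧
    (a * Real.Gamma (α + 1) / Real.Gamma (α - s₁ + 1)) *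
        (Real.Gamma ((α - s₁) + 1) / Real.Gamma ((α - s₁) - s₂ + 1)) =
      a * Real.Gamma (α + 1) / Real.Gamma (α - (s₁ + s₂) + 1) := by
  have e1 : (α - s₂) - s₁ = α - (s₁ + s₂) := by ring
  have e2 : (α - s₁) - s₂ = α - (s₁ + s₂) := by ring
  rw [e1, e2]
  constructor
  · field_simp
  · field_simp
end

section
/- Let q ∈ ℕ with q ≥ 1, let a, α ∈ ℝ with −1 < α, and set s = −1/q. Then h(q) = (a/(α+1), α+1), i.e. applying the order-(−1/q) fractional derivative rule q times to a·x^α yields a · x^(α+1)/(α+1). (Paper's equation (4.1.17): the q-fold composition of the order-(−1/q) derivative of the second definition gives the antiderivative a x^(α+1)/(α+1) without any integration constant.) -/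
theorem fracDerIter_neg_one_div_q
    (q : ℕ) (hq : 1 ≤ q) (a α : ℝ) (hα : -1 < α) :
    fracDerIter (-(1 : ℝ) / q) a α q = (a / (α + 1), α + 1) := by
  have hq0 : (q : ℝ) ≠ 0 := Nat.cast_ne_zero.mpr (by omega)
  have key : ∀ m : ℕ, fracDerIter (-(1 : ℝ) / q) a α m =
      (a * Real.Gamma (α + 1) / Real.Gamma (α + m / q + 1), α + m / q) := by
    intro m
    induction m with
    | zero =>
      have hΓ : Real.Gamma (α + 1) ≠ 0 :=
        ne_of_gt (Real.Gamma_pos_of_pos (by linarith))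
      simp [fracDerIter]
      rw [mul_div_assoc, div_self hΓ, mul_one]
    | succ m ih =>
      have hpos : (0:ℝ) < α + m / q + 1 := by
        have : (0:ℝ) ≤ (m:ℝ) / q := by positivity
        linarith
      have hne : Real.Gamma (α + m / q + 1) ≠ 0 :=
        ne_of_gt (Real.Gamma_pos_of_pos hpos)
      rw [fracDerIter, ih]
      have hexp : α + (m:ℝ) / q - -(1:ℝ) / q = α + (m + 1 : ℕ) / q := by
        push_cast; field_simp; ring
      simp only [hexp]
      congr 1
      rw [div_mul_cancel₀ _ hne]
  rw [key q]
  have h1 : (q:ℝ) / q = 1 := div_self hq0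
  rw [h1]
  have hΓ1 : Real.Gamma (α + 1) ≠ 0 :=
    ne_of_gt (Real.Gamma_pos_of_pos (by linarith))
  have h2 : Real.Gamma (α + 1 + 1) = (α + 1) * Real.Gamma (α + 1) := by
    rw [Real.Gamma_add_one (by intro h; linarith [h])]
  rw [h2]
  have : a * Real.Gamma (α + 1) / ((α + 1) * Real.Gamma (α + 1)) = a / (α + 1) := by
    rw [mul_comm (α+1), ← div_div, mul_div_cancel_right₀ _ hΓ1]
  rw [this]
end
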